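/- arXiv:1411.5565 — 2 statements merged into one kernel-verified Lean document; each statement's English description precedes it below -/
import Mathlib

section
/- Let f : A → A be a continuous map and let K ⊆ A be an inessential continuum (i.e., K is contained in some connected, simply connected open subset of A) with f(K) ⊆ K. Then there exist a lift F : Ã → Ã of f and a nonempty compact connected set C ⊆ π⁻¹(K) with F(C) ⊆ C. -/
/-!
The inessential continuum `K` lies in a simply connected open set `U`, over which the covering
`π` has a continuous section `σ`; put `C = σ(K)`. For any lift `F` of `f`, the maps `F` and
`σ ∘ π ∘ F` on `C` lie over the same map into `K`, so they differ by a deck translation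
`z ↦ z + k` at one point of `C`, hence, by uniqueness of lifts over the connected set `C`, at
every point.
The lift `z ↦ F z + k` then maps `C` into `σ(K) = C`.
-/

open Set Filter Topology

noncomputable section

/-- The open annulus `A = S¹ × (0,1)`. -/
abbrev Ann : Type := Circle × (Set.Ioo (0:ℝ) 1)

/-- The universal cover `Ã = ℝ × (0,1)`. -/
abbrev AnnTil : Type := ℝ × (Set.Ioo (0:ℝ) 1)

/-- The covering projection `π(x,y) = (exp(2πix), y)`. -/
def pr : AnnTil → Ann := fun z => (Circle.exp (2 * Real.pi * z.1), z.2)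

/-- Translation by an integer in the first coordinate: `z + k`. -/
def tr (z : AnnTil) (k : ℤ) : AnnTil := (z.1 + k, z.2)

/-- `F` is a lift of `f`. -/
def IsLift (f : Ann → Ann) (F : AnnTil → AnnTil) : Prop :=
  Continuous F ∧ pr ∘ F = f ∘ pr

/-- `f` has degree `d`: some lift satisfies `F(z+1) = F(z) + d`. -/
def HasDegree (f : Ann → Ann) (d : ℤ) : Prop :=
  ∃ F : AnnTil → AnnTil, IsLift f F ∧ ∀ z, F (tr z 1) = tr (F z) d

/-- A subset of the annulus is essential if it is not contained in any
connected, simply connected open subset. -/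
def IsEssential (K : Set Ann) : Prop :=
  ¬ ∃ U : Set Ann, IsOpen U ∧ IsConnected U ∧ SimplyConnectedSpace U ∧ K ⊆ U

/-- Nielsen equivalence of fixed points `p`, `q` of `g`: there is a path `γ`
from `p` to `q` homotopic (rel endpoints) to `g ∘ γ`. -/
def NielsenEquiv (g : Ann → Ann) (p q : Ann) : Prop :=
  ∃ (hg : Continuous g) (hp : g p = p) (hq : g q = q) (γ : Path p q),
    γ.Homotopic ((γ.map hg).cast hp.symm hq.symm)

/-- `g` has exactly `N` Nielsen classes of fixed points. -/
def HasExactlyNielsenClasses (g : Ann → Ann) (N : ℕ) : Prop :=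
  ∃ S : Finset Ann, S.card = N ∧ (∀ p ∈ S, g p = p) ∧
    (∀ p ∈ S, ∀ q ∈ S, p ≠ q → ¬ NielsenEquiv g p q) ∧
    (∀ p, g p = p → ∃ q ∈ S, NielsenEquiv g p q)

/-- `Fill K`: the union of `K` with the connected components of its
complement whose closure is compact. -/
def Fill (K : Set Ann) : Set Ann :=
  K ∪ {x | x ∈ Kᶜ ∧ IsCompact (closure (connectedComponentIn Kᶜ x))}

open Real

instance : LocallyPathConnectedSpace Circle :=
  (Circle.isCoveringMap_exp.isQuotientMap Circle.exp_surjective).locallyPathConnectedSpace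

instance : LocallyPathConnectedSpace (Ioo (0 : ℝ) 1) :=
  (convex_Ioo 0 1).locallyPathConnectedSpace

instance : ContractibleSpace (Ioo (0 : ℝ) 1) :=
  (convex_Ioo 0 1).contractibleSpace ⟨1 / 2, by norm_num, by norm_num⟩

def expTwoPi (t : ℝ) : Circle := Circle.exp (2 * π * t)

theorem isCoveringMap_expTwoPi : IsCoveringMap expTwoPi :=
  Circle.isCoveringMap_exp.comp_homeomorph (Homeomorph.mulLeft₀ (2 * π) (by positivity))

theorem expTwoPi_surjective : Function.Surjective expTwoPi :=
  Circle.exp_surjective.comp (Homeomorph.mulLeft₀ (2 * π) (by positivity)).surjective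

theorem expTwoPi_eq_expTwoPi_iff {s t : ℝ} :
    expTwoPi s = expTwoPi t ↔ ∃ m : ℤ, s = t + m := by
  have hπ : (2 * π) ≠ 0 := by positivity
  simp only [expTwoPi, Circle.exp_eq_exp]
  refine exists_congr fun m => ⟨fun h => mul_left_cancel₀ hπ ?_, fun h => ?_⟩
  · linear_combination h
  · linear_combination 2 * π * h

theorem exists_lift_expTwoPi {X : Type*} [TopologicalSpace X] [SimplyConnectedSpace X]
    [LocallyPathConnectedSpace X] {g : X → Circle} (hg : Continuous g) :
    ∃ θ : X → ℝ, Continuous θ ∧ ∀ x, expTwoPi (θ x) = g x := by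
  obtain ⟨x₀⟩ := PathConnectedSpace.nonempty (X := X)
  obtain ⟨t₀, ht₀⟩ := expTwoPi_surjective (g x₀)
  obtain ⟨θ, ⟨-, hθ⟩, -⟩ :=
    isCoveringMap_expTwoPi.existsUnique_continuousMap_lifts ⟨g, hg⟩ x₀ t₀ ht₀
  exact ⟨θ, θ.continuous, congrFun hθ⟩

theorem pr_apply (z : AnnTil) : pr z = (expTwoPi z.1, z.2) := rfl

theorem continuous_pr : Continuous pr :=
  ((Circle.exp.continuous.comp (continuous_const.mul continuous_id)).comp
    continuous_fst).prodMk continuous_snd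

theorem continuous_tr (k : ℤ) : Continuous fun z => tr z k :=
  (continuous_fst.add continuous_const).prodMk continuous_snd

theorem pr_tr (z : AnnTil) (k : ℤ) : pr (tr z k) = pr z := by
  rw [pr_apply, pr_apply, Prod.mk.injEq, expTwoPi_eq_expTwoPi_iff]
  exact ⟨⟨k, rfl⟩, rfl⟩

theorem exists_eq_tr_of_pr_eq {z w : AnnTil} (h : pr z = pr w) : ∃ k : ℤ, w = tr z k := by
  rw [pr_apply, pr_apply, Prod.mk.injEq, expTwoPi_eq_expTwoPi_iff] at h
  obtain ⟨⟨k, hk⟩, h₂⟩ := h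
  exact ⟨-k, Prod.ext (by simp [tr, hk]) h₂.symm⟩

theorem eqOn_of_pr_comp_eqOn {X : Type*} [TopologicalSpace X] {s : Set X}
    (hs : IsPreconnected s) {g₁ g₂ : X → AnnTil} (h₁ : ContinuousOn g₁ s)
    (h₂ : ContinuousOn g₂ s) (he : s.EqOn (pr ∘ g₁) (pr ∘ g₂)) {x : X} (hx : x ∈ s)
    (hgx : g₁ x = g₂ x) : s.EqOn g₁ g₂ := by
  have hfst := isCoveringMap_expTwoPi.eqOn_of_comp_eqOn hs
    (continuous_fst.comp_continuousOn h₁) (continuous_fst.comp_continuousOn h₂)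
    (fun y hy => congrArg Prod.fst (he hy)) hx (congrArg Prod.fst hgx)
  exact fun y hy => Prod.ext (hfst hy) (congrArg Prod.snd (he hy) :)

theorem IsLift.translate {f : Ann → Ann} {F : AnnTil → AnnTil} (hF : IsLift f F) (k : ℤ) :
    IsLift f fun z => tr (F z) k :=
  ⟨(continuous_tr k).comp hF.1, funext fun z => by simpa [pr_tr] using congrFun hF.2 z⟩

theorem exists_isLift {f : Ann → Ann} (hf : Continuous f) :
    ∃ F : AnnTil → AnnTil, IsLift f F := by
  obtain ⟨θ, hθ, hθf⟩ := exists_lift_expTwoPi (continuous_fst.comp (hf.comp continuous_pr))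
  exact ⟨fun z => (θ z, (f (pr z)).2),
    hθ.prodMk (continuous_snd.comp (hf.comp continuous_pr)),
    funext fun z => Prod.ext (hθf z) rfl⟩

theorem exists_section_pr {U : Set Ann} (hU : IsOpen U) (hsc : SimplyConnectedSpace U) :
    ∃ σ : Ann → AnnTil, ContinuousOn σ U ∧ ∀ a ∈ U, pr (σ a) = a := by
  have := hU.locallyPathConnectedSpace
  obtain ⟨θ, hθ, hθU⟩ :=
    exists_lift_expTwoPi (g := fun a : U => (a : Ann).1)
      (continuous_fst.comp continuous_subtype_val)
  classical
  let σ : Ann → AnnTil := fun a => (if h : a ∈ U then θ ⟨a, h⟩ else 0, a.2)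
  have hσU : U.domRestrict σ = fun a => (θ a, a.1.2) :=
    funext fun a => by simp [σ, Set.domRestrict]
  refine ⟨σ, continuousOn_iff_continuous_domRestrict.mpr ?_, fun a ha => ?_⟩
  · rw [hσU]
    exact hθ.prodMk (continuous_snd.comp continuous_subtype_val)
  · exact Prod.ext (by simpa [σ, ha, pr_apply] using hθU ⟨a, ha⟩) rfl

theorem IsLift.exists_mapsTo_tr_image {f : Ann → Ann} {F : AnnTil → AnnTil} (hF : IsLift f F)
    {K : Set Ann} (hK : IsPreconnected K) (hKne : K.Nonempty) (hfK : MapsTo f K K)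
    {σ : Ann → AnnTil} (hσ : ContinuousOn σ K) (hpσ : ∀ a ∈ K, pr (σ a) = a) :
    ∃ k : ℤ, MapsTo (fun z => tr (F z) k) (σ '' K) (σ '' K) := by
  have hprF : ∀ z ∈ σ '' K, pr (F z) ∈ K := by
    rintro _ ⟨a, ha, rfl⟩
    rw [← Function.comp_apply (f := pr), hF.2, Function.comp_apply, hpσ a ha]
    exact hfK ha
  obtain ⟨a₀, ha₀⟩ := hKne
  obtain ⟨k, hk⟩ := exists_eq_tr_of_pr_eq (hpσ _ (hprF _ ⟨a₀, ha₀, rfl⟩)).symm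
  refine ⟨k, fun z hz => ?_⟩
  have hlifts : (σ '' K).EqOn (σ ∘ pr ∘ F) fun z => tr (F z) k :=
    eqOn_of_pr_comp_eqOn (hK.image σ hσ)
      (hσ.comp (continuous_pr.comp hF.1).continuousOn hprF)
      ((continuous_tr k).comp hF.1).continuousOn
      (fun z hz => by simp [hpσ _ (hprF z hz), pr_tr]) ⟨a₀, ha₀, rfl⟩ hk
  rw [← hlifts hz]
  exact mem_image_of_mem σ (hprF z hz)

/-- If a continuous annulus map preserves an inessential continuum `K`, then
some lift preserves a nonempty compact connected subset of `π⁻¹(K)`. -/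
theorem stmt_10 (f : Ann → Ann) (hf : Continuous f)
    (K : Set Ann) (hKc : IsCompact K) (hKconn : IsConnected K)
    (hKiness : ∃ U : Set Ann, IsOpen U ∧ IsConnected U ∧
      SimplyConnectedSpace U ∧ K ⊆ U)
    (hKinv : f '' K ⊆ K) :
    ∃ F : AnnTil → AnnTil, IsLift f F ∧
      ∃ C : Set AnnTil, C.Nonempty ∧ IsCompact C ∧ IsConnected C ∧
        C ⊆ pr ⁻¹' K ∧ F '' C ⊆ C := by
  obtain ⟨U, hUo, -, hUsc, hKU⟩ := hKiness
  obtain ⟨σ, hσ, hpσ⟩ := exists_section_pr hUo hUsc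
  have hσK : ContinuousOn σ K := hσ.mono hKU
  obtain ⟨F, hF⟩ := exists_isLift hf
  obtain ⟨k, hk⟩ := hF.exists_mapsTo_tr_image hKconn.isPreconnected hKconn.nonempty
    (mapsTo_iff_image_subset.mpr hKinv) hσK fun a ha => hpσ a (hKU ha)
  refine ⟨_, hF.translate k, σ '' K, hKconn.nonempty.image σ, hKc.image_of_continuousOn hσK,
    hKconn.image σ hσK, ?_, hk.image_subset⟩
  rintro _ ⟨a, ha, rfl⟩
  rwa [mem_preimage, hpσ a (hKU ha)]
end
end

section
/- Let d be an integer with |d| > 1 and let F : Ã → Ã be a continuous map satisfying F(z + 1) = F(z) + d for all z ∈ Ã. Let x̃ ∈ Ã, k ∈ ℤ and n ≥ 1, and suppose that (Fᵐ(x̃))₁ / dᵐ converges to k/(dⁿ − 1) as m → ∞, where (·)₁ denotes the first coordinate. Define G : Ã → Ã by G(z) = Fⁿ(z) − k. Then (Gᵐ(x̃))₁ / dⁿᵐ converges to 0 as m → ∞. -/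
open Set Filter Topology

noncomputable section

/-!
Since `F(z + j) = F(z) + d j` for every integer `j`, `G = Fⁿ - k` iterates in closed form:
`Gᵐ(x) = F^{nm}(x) - k (1 + q + ⋯ + q^{m-1})` with `q = dⁿ`. Dividing by `qᵐ`, the first term
tends to `k / (q - 1)` by hypothesis, and so does the geometric term, because `|q| > 1`.
-/

@[simp]
lemma tr_fst (z : AnnTil) (j : ℤ) : (tr z j).1 = z.1 + j := rfl

lemma tr_tr (z : AnnTil) (a b : ℤ) : tr (tr z a) b = tr z (a + b) := by
  simp only [tr, Int.cast_add, add_assoc]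

@[simp]
lemma tr_zero (z : AnnTil) : tr z 0 = z := by
  simp [tr]

lemma map_tr_of_map_tr_one {F : AnnTil → AnnTil} {d : ℤ}
    (hF : ∀ z, F (tr z 1) = tr (F z) d) (z : AnnTil) (j : ℤ) :
    F (tr z j) = tr (F z) (d * j) := by
  induction j using Int.induction_on with
  | zero => simp
  | succ i ih => rw [← tr_tr, hF, ih, tr_tr, mul_add_one]
  | pred i ih =>
    have hstep := hF (tr z (-i - 1))
    rw [tr_tr, sub_add_cancel, ih] at hstep
    calc F (tr z (-i - 1)) = tr (tr (F (tr z (-i - 1))) d) (-d) := by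
          rw [tr_tr, add_neg_cancel, tr_zero]
      _ = tr (F z) (d * (-i - 1)) := by rw [← hstep, tr_tr]; ring_nf

lemma iterate_map_tr {H : AnnTil → AnnTil} {e : ℤ}
    (hH : ∀ z j, H (tr z j) = tr (H z) (e * j)) (m : ℕ) (z : AnnTil) (j : ℤ) :
    H^[m] (tr z j) = tr (H^[m] z) (e ^ m * j) := by
  induction m generalizing z j with
  | zero => simp
  | succ m ih => rw [Function.iterate_succ_apply, Function.iterate_succ_apply, hH, ih,
      mul_left_comm, pow_succ', mul_assoc]

lemma iterate_tr_comp {H G : AnnTil → AnnTil} {e k : ℤ}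
    (hH : ∀ z j, H (tr z j) = tr (H z) (e * j)) (hG : ∀ z, G z = tr (H z) (-k))
    (m : ℕ) (z : AnnTil) :
    G^[m] z = tr (H^[m] z) (-(k * ∑ i ∈ Finset.range m, e ^ i)) := by
  induction m with
  | zero => simp
  | succ m ih =>
    rw [Function.iterate_succ_apply', ih, hG, hH, tr_tr, ← Function.iterate_succ_apply' H,
      geom_sum_succ]
    congr 1
    ring

lemma tendsto_sub_mul_geom_sum_div_pow {q c : ℝ} (hq : 1 < |q|) {u : ℕ → ℝ}
    (hu : Tendsto (fun m ↦ u m / q ^ m) atTop (𝓝 (c / (q - 1)))) :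
    Tendsto (fun m ↦ (u m - c * ∑ i ∈ Finset.range m, q ^ i) / q ^ m) atTop (𝓝 0) := by
  have hq0 : q ≠ 0 := by rintro rfl; norm_num at hq
  have hq1 : q ≠ 1 := by rintro rfl; norm_num at hq
  have hinv : Tendsto (fun m ↦ q⁻¹ ^ m) atTop (𝓝 0) :=
    tendsto_pow_atTop_nhds_zero_of_abs_lt_one (by rwa [abs_inv, inv_lt_one₀ (by linarith)])
  have hgeom : Tendsto (fun m ↦ c * (∑ i ∈ Finset.range m, q ^ i) / q ^ m) atTop
      (𝓝 (c / (q - 1))) := by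
    have hlim := (tendsto_const_nhds (x := c / (q - 1))).sub (hinv.const_mul (c / (q - 1)))
    rw [mul_zero, sub_zero] at hlim
    refine hlim.congr fun m ↦ ?_
    rw [geom_sum_eq hq1, inv_pow]
    field_simp [pow_ne_zero m hq0, sub_ne_zero.mpr hq1]
  simpa only [sub_div, mul_div_assoc, sub_self] using hu.sub hgeom

theorem stmt_14_general (d : ℤ) (hd : 1 < |d|)
    (F : AnnTil → AnnTil)
    (hFdeg : ∀ z : AnnTil, F (tr z 1) = tr (F z) d)
    (x : AnnTil) (k : ℤ) (n : ℕ) (hn : 1 ≤ n)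
    (hlim : Filter.Tendsto (fun m : ℕ => (F^[m] x).1 / (d : ℝ) ^ m)
      Filter.atTop (nhds ((k : ℝ) / ((d : ℝ) ^ n - 1))))
    (G : AnnTil → AnnTil) (hG : ∀ z : AnnTil, G z = tr (F^[n] z) (-k)) :
    Filter.Tendsto (fun m : ℕ => (G^[m] x).1 / ((d : ℝ) ^ n) ^ m)
      Filter.atTop (nhds 0) := by
  have hq : 1 < |(d : ℝ) ^ n| := by
    rw [abs_pow]
    exact one_lt_pow₀ (by exact_mod_cast hd) (by omega)
  have hFn : ∀ z j, F^[n] (tr z j) = tr (F^[n] z) (d ^ n * j) :=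
    iterate_map_tr (map_tr_of_map_tr_one hFdeg) n
  have hsub : Tendsto (fun m ↦ (F^[n * m] x).1 / ((d : ℝ) ^ n) ^ m) atTop
      (𝓝 ((k : ℝ) / ((d : ℝ) ^ n - 1))) := by
    simpa only [Function.comp_def, id, pow_mul] using
      hlim.comp (tendsto_id.const_mul_atTop' (by omega : 0 < n))
  refine (tendsto_sub_mul_geom_sum_div_pow hq hsub).congr fun m ↦ ?_
  rw [iterate_tr_comp hFn hG, tr_fst, Function.iterate_mul]
  push_cast
  ring

/-- Computation of the asymptotic translation number of `G = Fⁿ - k`. -/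
theorem stmt_14 (d : ℤ) (hd : 1 < |d|)
    (F : AnnTil → AnnTil) (hFcont : Continuous F)
    (hFdeg : ∀ z : AnnTil, F (tr z 1) = tr (F z) d)
    (x : AnnTil) (k : ℤ) (n : ℕ) (hn : 1 ≤ n)
    (hlim : Filter.Tendsto (fun m : ℕ => (F^[m] x).1 / (d : ℝ) ^ m)
      Filter.atTop (nhds ((k : ℝ) / ((d : ℝ) ^ n - 1))))
    (G : AnnTil → AnnTil) (hG : ∀ z : AnnTil, G z = tr (F^[n] z) (-k)) :
    Filter.Tendsto (fun m : ℕ => (G^[m] x).1 / ((d : ℝ) ^ n) ^ m)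
      Filter.atTop (nhds 0) :=
  stmt_14_general d hd F hFdeg x k n hn hlim G hG
end
end
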